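/- Let G be a row-finite directed graph which satisfies Condition (K), and let (E, v_0) be a 1-sink extension of G such that the set of paths in E with range v_0 is infinite. Let H' := {v ∈ E^0 : v ≱ v_0} and H_{v_0} := E^0 ∖ G^0, and let H_E be the inessential part of E. Then the smallest saturated hereditary subset of E^0 containing H' ∪ H_{v_0} is exactly H_E ∪ H_{v_0}; that is, H' ∨ H_{v_0} = H_E ∪ H_{v_0} in the lattice of saturated hereditary subsets of E^0. -/

import Mathlib

/-- A directed graph realized inside ambient vertex type `V` and edge type `E`,
with globally given source and range maps. -/
structure DGraph (V E : Type*) where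
  verts : Set V
  edges : Set E

variable {V E : Type*}

/-- The endpoints of every edge of the graph are vertices of the graph. -/
def WellFormed (s r : E → V) (G : DGraph V E) : Prop :=
  ∀ e ∈ G.edges, s e ∈ G.verts ∧ r e ∈ G.verts

/-- Row-finite: every vertex emits only finitely many edges. -/
def RowFinite (s : E → V) (G : DGraph V E) : Prop :=
  ∀ v : V, {e ∈ G.edges | s e = v}.Finite

/-- A sink is a vertex emitting no edges. -/
def IsSink (s : E → V) (G : DGraph V E) (v : V) : Prop :=
  v ∈ G.verts ∧ ∀ e ∈ G.edges, s e ≠ v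

/-- A source is a vertex receiving no edges. -/
def IsSource (r : E → V) (G : DGraph V E) (v : V) : Prop :=
  v ∈ G.verts ∧ ∀ e ∈ G.edges, r e ≠ v

/-- A path is a nonempty finite sequence of composable edges of the graph. -/
def IsPath (s r : E → V) (G : DGraph V E) (p : List E) : Prop :=
  p ≠ [] ∧ (∀ e ∈ p, e ∈ G.edges) ∧ p.Chain' (fun e f => r e = s f)

/-- `PathFromTo s r G p v w` : `p` is a path in `G` with source `v` and range `w`. -/
def PathFromTo (s r : E → V) (G : DGraph V E) (p : List E) (v w : V) : Prop :=
  IsPath s r G p ∧ (∃ e, p.head? = some e ∧ s e = v) ∧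
    (∃ e, p.getLast? = some e ∧ r e = w)

/-- `v ≥ w` : `v = w` or there is a path from `v` to `w`. -/
def Reach (s r : E → V) (G : DGraph V E) (v w : V) : Prop :=
  v = w ∨ ∃ p, PathFromTo s r G p v w

/-- A loop based at `v` is a path with source and range `v`. -/
def IsLoop (s r : E → V) (G : DGraph V E) (p : List E) (v : V) : Prop :=
  PathFromTo s r G p v v

/-- A simple loop returns to its base point exactly once. -/
def IsSimpleLoop (s r : E → V) (G : DGraph V E) (p : List E) (v : V) : Prop :=
  IsLoop s r G p v ∧
    ∀ i (h : i + 1 < p.length), r (p.get ⟨i, Nat.lt_of_succ_lt h⟩) ≠ v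

/-- Condition (K): every vertex is the base of no loop or of at least two
distinct simple loops. -/
def ConditionK (s r : E → V) (G : DGraph V E) : Prop :=
  ∀ v ∈ G.verts, (¬ ∃ p, IsLoop s r G p v) ∨
    ∃ p q, IsSimpleLoop s r G p v ∧ IsSimpleLoop s r G q v ∧ p ≠ q

/-- A maximal tail in `G`. -/
def MaximalTail (s r : E → V) (G : DGraph V E) (γ : Set V) : Prop :=
  γ.Nonempty ∧ γ ⊆ G.verts ∧
  (∀ v ∈ γ, ∀ w ∈ γ, ∃ y ∈ γ, Reach s r G v y ∧ Reach s r G w y) ∧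
  (∀ v w, Reach s r G v w → w ∈ γ → v ∈ γ) ∧
  (∀ w ∈ γ, ∃ e ∈ G.edges, s e = w ∧ r e ∈ γ)

/-- `(Eg, v0)` is a 1-sink extension of `G`. -/
structure OneSinkExt (s r : E → V) (G Eg : DGraph V E) (v0 : V) : Prop where
  wfG : WellFormed s r G
  wfE : WellFormed s r Eg
  sub_verts : G.verts ⊆ Eg.verts
  sub_edges : G.edges ⊆ Eg.edges
  rowfin : RowFinite s Eg
  H_fin : (Eg.verts \ G.verts).Finite
  H_no_sources : ∀ v ∈ Eg.verts \ G.verts, ¬ IsSource r Eg v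
  v0_mem : v0 ∈ Eg.verts \ G.verts
  v0_sink : IsSink s Eg v0
  sink_unique : ∀ v ∈ Eg.verts \ G.verts, IsSink s Eg v → v = v0
  no_H_loops : ∀ p v, IsLoop s r Eg p v →
    ¬ (∀ e ∈ p, s e ∈ Eg.verts \ G.verts ∧ r e ∈ Eg.verts \ G.verts)
  new_edge_range : ∀ e ∈ Eg.edges, e ∉ G.edges → r e ∈ Eg.verts \ G.verts
  sinks_preserved : ∀ v, IsSink s G v → IsSink s Eg v

/-- The closure of the sink `v0` : the union of all maximal tails of `G`
every vertex of which reaches `v0` in `Eg`. -/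
def closureSink (s r : E → V) (G Eg : DGraph V E) (v0 : V) : Set V :=
  {v | ∃ γ, MaximalTail s r G γ ∧ (∀ u ∈ γ, Reach s r Eg u v0) ∧ v ∈ γ}

/-- Hereditary subset of vertices. -/
def Hereditary (s r : E → V) (G : DGraph V E) (K : Set V) : Prop :=
  ∀ e ∈ G.edges, s e ∈ K → r e ∈ K

/-- Saturated subset of vertices. -/
def Saturated (s r : E → V) (G : DGraph V E) (K : Set V) : Prop :=
  ∀ v ∈ G.verts, ¬ IsSink s G v → (∀ e ∈ G.edges, s e = v → r e ∈ K) → v ∈ K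

/-! A vertex of `G` outside a saturated hereditary `S ⊇ H' ∪ H_{v₀}` still reaches `v₀`, hence is
not a sink of `E`; by saturation it emits an edge leaving `S`, whose range lies in `G⁰` because
`H_{v₀} ⊆ S`. Iterating gives an infinite path in `G` outside `S`, and the vertices reaching it
form a maximal tail all of whose vertices reach `v₀`; so every vertex of `H_E` lies in `S`. -/

/-- The inessential part `H_E` of the 1-sink extension `(Eg, v0)`. -/
def inessentialPart (s r : E → V) (G Eg : DGraph V E) (v0 : V) : Set V :=
  G.verts \ closureSink s r G Eg v0

section Paths

variable {s r : E → V} {G Eg : DGraph V E}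

theorem PathFromTo.append {p q : List E} {a b c : V}
    (hp : PathFromTo s r G p a b) (hq : PathFromTo s r G q b c) :
    PathFromTo s r G (p ++ q) a c := by
  obtain ⟨⟨hpne, hpmem, hpch⟩, ⟨e₁, he₁, hse₁⟩, ⟨e₂, he₂, hre₂⟩⟩ := hp
  obtain ⟨⟨-, hqmem, hqch⟩, ⟨e₃, he₃, hse₃⟩, ⟨e₄, he₄, hre₄⟩⟩ := hq
  refine ⟨⟨by simp [hpne], ?_, ?_⟩, ⟨e₁, ?_, hse₁⟩, ⟨e₄, ?_, hre₄⟩⟩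
  · intro e he
    rcases List.mem_append.mp he with h | h
    exacts [hpmem e h, hqmem e h]
  · refine List.isChain_append.mpr ⟨hpch, hqch, ?_⟩
    intro x hx y hy
    rw [he₂, Option.mem_some_iff] at hx
    rw [he₃, Option.mem_some_iff] at hy
    rw [← hx, ← hy, hre₂, hse₃]
  · rw [List.head?_append_of_ne_nil _ hpne, he₁]
  · rw [List.getLast?_append, he₄]
    rfl

theorem PathFromTo.exists_edge_reach {p : List E} {a b : V} (hp : PathFromTo s r G p a b) :
    ∃ e ∈ G.edges, s e = a ∧ Reach s r G (r e) b := by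
  obtain ⟨⟨hne, hmem, hch⟩, ⟨e₁, he₁, hse₁⟩, ⟨e₂, he₂, hre₂⟩⟩ := hp
  obtain ⟨e, t, rfl⟩ := List.exists_cons_of_ne_nil hne
  obtain rfl : e = e₁ := by simpa using he₁
  refine ⟨e, hmem e List.mem_cons_self, hse₁, ?_⟩
  rcases t with _ | ⟨f, t⟩
  · obtain rfl : e = e₂ := by simpa using he₂
    exact Or.inl hre₂
  · rw [List.Chain', List.isChain_cons_cons] at hch
    exact Or.inr ⟨f :: t, ⟨List.cons_ne_nil _ _, fun g hg => hmem g (List.mem_cons_of_mem _ hg),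
      hch.2⟩, ⟨f, rfl, hch.1.symm⟩, ⟨e₂, by rwa [← List.getLast?_cons_cons (a := e)], hre₂⟩⟩

theorem Reach.trans {a b c : V} (hab : Reach s r G a b) (hbc : Reach s r G b c) :
    Reach s r G a c := by
  rcases hab with rfl | ⟨p, hp⟩
  · exact hbc
  rcases hbc with rfl | ⟨q, hq⟩
  · exact Or.inr ⟨p, hp⟩
  · exact Or.inr ⟨p ++ q, hp.append hq⟩

theorem Reach.of_edge {e : E} (he : e ∈ G.edges) : Reach s r G (s e) (r e) :=
  Or.inr ⟨[e], ⟨List.cons_ne_nil _ _, by simpa using he, List.isChain_singleton _⟩,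
    ⟨e, rfl, rfl⟩, ⟨e, rfl, rfl⟩⟩

theorem Reach.mono (hsub : G.edges ⊆ Eg.edges) {a b : V} (h : Reach s r G a b) :
    Reach s r Eg a b := by
  rcases h with rfl | ⟨p, ⟨hne, hmem, hch⟩, hs, hr⟩
  · exact Or.inl rfl
  · exact Or.inr ⟨p, ⟨hne, fun e he => hsub (hmem e he), hch⟩, hs, hr⟩

theorem Reach.mem_verts (hwf : WellFormed s r G) {a b : V} (h : Reach s r G a b)
    (hb : b ∈ G.verts) : a ∈ G.verts := by
  rcases h with rfl | ⟨p, hp⟩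
  · exact hb
  · obtain ⟨e, he, rfl, -⟩ := hp.exists_edge_reach
    exact (hwf e he).1

theorem Reach.not_isSink {a b : V} (h : Reach s r G a b) (hab : a ≠ b) : ¬ IsSink s G a := by
  rcases h with h | ⟨p, hp⟩
  · exact absurd h hab
  · obtain ⟨e, he, hse, -⟩ := hp.exists_edge_reach
    exact fun hsink => hsink.2 e he hse

end Paths

section InfinitePaths

variable {s r : E → V} {G : DGraph V E}

theorem exists_seq_of_forall_exists_edge {P : V → Prop}
    (hstep : ∀ v, P v → ∃ e ∈ G.edges, s e = v ∧ P (r e)) {v : V} (hv : P v) :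
    ∃ X : ℕ → V, X 0 = v ∧ (∀ n, P (X n)) ∧
      ∀ n, ∃ e ∈ G.edges, s e = X n ∧ r e = X (n + 1) := by
  choose f hfG hfs hfP using hstep
  let next : {w // P w} → {w // P w} := fun w => ⟨r (f w.1 w.2), hfP w.1 w.2⟩
  refine ⟨fun n => (next^[n] ⟨v, hv⟩).1, rfl, fun n => (next^[n] ⟨v, hv⟩).2, fun n => ?_⟩
  let w := next^[n] ⟨v, hv⟩
  exact ⟨f w.1 w.2, hfG _ _, hfs _ _, by simp only [Function.iterate_succ_apply']; rfl⟩

variable {X : ℕ → V} (hX : ∀ n, ∃ e ∈ G.edges, s e = X n ∧ r e = X (n + 1))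
include hX

theorem reach_seq_of_le {n m : ℕ} (hnm : n ≤ m) : Reach s r G (X n) (X m) := by
  induction m, hnm using Nat.le_induction with
  | base => exact Or.inl rfl
  | succ m _ ih =>
    obtain ⟨e, he, hse, hre⟩ := hX m
    exact ih.trans (hse ▸ hre ▸ Reach.of_edge he)

theorem maximalTail_setOf_reach_seq (hwf : WellFormed s r G) :
    MaximalTail s r G {w | ∃ n, Reach s r G w (X n)} := by
  have hXmem : ∀ n, X n ∈ G.verts := fun n => by
    obtain ⟨e, he, hse, -⟩ := hX n
    exact hse ▸ (hwf e he).1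
  refine ⟨⟨X 0, 0, Or.inl rfl⟩, fun w ⟨n, hn⟩ => hn.mem_verts hwf (hXmem n), ?_, ?_, ?_⟩
  · rintro a ⟨n, hn⟩ b ⟨m, hm⟩
    exact ⟨X (max n m), ⟨_, Or.inl rfl⟩, hn.trans (reach_seq_of_le hX (le_max_left n m)),
      hm.trans (reach_seq_of_le hX (le_max_right n m))⟩
  · rintro a b hab ⟨n, hn⟩
    exact ⟨n, hab.trans hn⟩
  · rintro w ⟨n, hn | ⟨p, hp⟩⟩
    · obtain ⟨e, he, hse, hre⟩ := hX n
      exact ⟨e, he, hn ▸ hse, n + 1, hre ▸ Or.inl rfl⟩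
    · obtain ⟨e, he, hse, hre⟩ := hp.exists_edge_reach
      exact ⟨e, he, hse, n, hre⟩

end InfinitePaths

section OneSinkExt

variable {s r : E → V} {G Eg : DGraph V E} {v0 : V} (hext : OneSinkExt s r G Eg v0)
include hext

theorem OneSinkExt.mem_edges_of_range_mem {e : E} (he : e ∈ Eg.edges) (hre : r e ∈ G.verts) :
    e ∈ G.edges := by
  by_contra h
  exact (hext.new_edge_range e he h).2 hre

theorem hereditary_inessentialPart_union :
    Hereditary s r Eg (inessentialPart s r G Eg v0 ∪ (Eg.verts \ G.verts)) := by
  rintro e he (⟨hsG, hsC⟩ | ⟨-, hsG⟩)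
  · by_cases hre : r e ∈ G.verts
    · refine Or.inl ⟨hre, fun ⟨γ, hγ, hγv0, hreγ⟩ => hsC ⟨γ, hγ, hγv0, ?_⟩⟩
      exact hγ.2.2.2.1 _ _ (Reach.of_edge (hext.mem_edges_of_range_mem he hre)) hreγ
    · exact Or.inr ⟨(hext.wfE e he).2, hre⟩
  · exact Or.inr (hext.new_edge_range e he fun heG => hsG (hext.wfG e heG).1)

theorem saturated_inessentialPart_union :
    Saturated s r Eg (inessentialPart s r G Eg v0 ∪ (Eg.verts \ G.verts)) := by
  intro v hv _ hall
  by_cases hvG : v ∈ G.verts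
  · refine Or.inl ⟨hvG, fun ⟨γ, hγ, hγv0, hvγ⟩ => ?_⟩
    obtain ⟨e, heG, hse, hreγ⟩ := hγ.2.2.2.2 v hvγ
    rcases hall e (hext.sub_edges heG) hse with ⟨-, hreC⟩ | ⟨-, hreG⟩
    · exact hreC ⟨γ, hγ, hγv0, hreγ⟩
    · exact hreG (hγ.2.1 hreγ)
  · exact Or.inr ⟨hv, hvG⟩

variable {S : Set V} (hSs : Saturated s r Eg S)
  (hH' : {v ∈ Eg.verts | ¬ Reach s r Eg v v0} ⊆ S) (hH : Eg.verts \ G.verts ⊆ S)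
include hSs hH' hH

theorem exists_edge_range_notMem {v : V} (hv : v ∈ G.verts) (hvS : v ∉ S) :
    ∃ e ∈ G.edges, s e = v ∧ r e ∈ G.verts ∧ r e ∉ S := by
  have hvE : v ∈ Eg.verts := hext.sub_verts hv
  have hreach : Reach s r Eg v v0 := by
    by_contra h
    exact hvS (hH' ⟨hvE, h⟩)
  have hnsink : ¬ IsSink s Eg v :=
    hreach.not_isSink fun h => hext.v0_mem.2 (h ▸ hv)
  obtain ⟨e, he, hse, hreS⟩ : ∃ e ∈ Eg.edges, s e = v ∧ r e ∉ S := by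
    by_contra! h
    exact hvS (hSs v hvE hnsink h)
  have hreG : r e ∈ G.verts := by
    by_contra h
    exact hreS (hH ⟨(hext.wfE e he).2, h⟩)
  exact ⟨e, hext.mem_edges_of_range_mem he hreG, hse, hreG, hreS⟩

theorem inessentialPart_subset : inessentialPart s r G Eg v0 ⊆ S := by
  rintro v ⟨hvG, hvC⟩
  by_contra hvS
  obtain ⟨X, rfl, hXS, hX⟩ := exists_seq_of_forall_exists_edge
    (P := fun w => w ∈ G.verts ∧ w ∉ S)
    (fun w hw => (exists_edge_range_notMem hext hSs hH' hH hw.1 hw.2).imp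
      fun _ ⟨he, hse, hre⟩ => ⟨he, hse, hre⟩) ⟨hvG, hvS⟩
  have hXv0 : ∀ n, Reach s r Eg (X n) v0 := fun n => by
    by_contra h
    exact (hXS n).2 (hH' ⟨hext.sub_verts (hXS n).1, h⟩)
  refine hvC ⟨_, maximalTail_setOf_reach_seq hX hext.wfG, ?_, 0, Or.inl rfl⟩
  rintro u ⟨n, hn⟩
  exact (hn.mono hext.sub_edges).trans (hXv0 n)

end OneSinkExt

theorem wedge_eq_union_general
    (s r : E → V) (G Eg : DGraph V E) (v0 : V)
    (hext : OneSinkExt s r G Eg v0) :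
    ((G.verts \ closureSink s r G Eg v0) ∪ (Eg.verts \ G.verts)) ⊆ Eg.verts ∧
    Hereditary s r Eg
      ((G.verts \ closureSink s r G Eg v0) ∪ (Eg.verts \ G.verts)) ∧
    Saturated s r Eg
      ((G.verts \ closureSink s r G Eg v0) ∪ (Eg.verts \ G.verts)) ∧
    ({v ∈ Eg.verts | ¬ Reach s r Eg v v0} ∪ (Eg.verts \ G.verts)) ⊆
      ((G.verts \ closureSink s r G Eg v0) ∪ (Eg.verts \ G.verts)) ∧
    (∀ S ⊆ Eg.verts, Hereditary s r Eg S → Saturated s r Eg S →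
      ({v ∈ Eg.verts | ¬ Reach s r Eg v v0} ∪ (Eg.verts \ G.verts)) ⊆ S →
      ((G.verts \ closureSink s r G Eg v0) ∪ (Eg.verts \ G.verts)) ⊆ S) := by
  have hH'_subset : {v ∈ Eg.verts | ¬ Reach s r Eg v v0} ⊆
      inessentialPart s r G Eg v0 ∪ (Eg.verts \ G.verts) := by
    rintro v ⟨hvE, hv⟩
    by_cases hvG : v ∈ G.verts
    · exact Or.inl ⟨hvG, fun ⟨γ, _, hγv0, hvγ⟩ => hv (hγv0 v hvγ)⟩
    · exact Or.inr ⟨hvE, hvG⟩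
  refine ⟨Set.union_subset (Set.sdiff_subset.trans hext.sub_verts) Set.sdiff_subset,
    hereditary_inessentialPart_union hext, saturated_inessentialPart_union hext,
    Set.union_subset hH'_subset Set.subset_union_right, fun S _ _ hSs hS => ?_⟩
  rw [Set.union_subset_iff] at hS
  exact Set.union_subset (inessentialPart_subset hext hSs hS.1 hS.2) hS.2

/-- Let `(Eg, v0)` be a 1-sink extension of a row-finite graph `G`
satisfying Condition (K), such that the set of paths in `Eg` with range `v0`
is infinite.  With `H' = {v ∈ E^0 : v ≱ v0}`, `H_{v0} = E^0 \ G^0` and `H_E`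
the inessential part, the set `H_E ∪ H_{v0}` is the smallest saturated
hereditary subset of `E^0` containing `H' ∪ H_{v0}`. -/
theorem wedge_eq_union
    (s r : E → V) (G Eg : DGraph V E) (v0 : V)
    (hGrf : RowFinite s G) (hK : ConditionK s r G)
    (hext : OneSinkExt s r G Eg v0)
    (hinf : {p : List E |
        IsPath s r Eg p ∧ ∃ e, p.getLast? = some e ∧ r e = v0}.Infinite) :
    ((G.verts \ closureSink s r G Eg v0) ∪ (Eg.verts \ G.verts)) ⊆ Eg.verts ∧
    Hereditary s r Eg
      ((G.verts \ closureSink s r G Eg v0) ∪ (Eg.verts \ G.verts)) ∧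
    Saturated s r Eg
      ((G.verts \ closureSink s r G Eg v0) ∪ (Eg.verts \ G.verts)) ∧
    ({v ∈ Eg.verts | ¬ Reach s r Eg v v0} ∪ (Eg.verts \ G.verts)) ⊆
      ((G.verts \ closureSink s r G Eg v0) ∪ (Eg.verts \ G.verts)) ∧
    (∀ S ⊆ Eg.verts, Hereditary s r Eg S → Saturated s r Eg S →
      ({v ∈ Eg.verts | ¬ Reach s r Eg v v0} ∪ (Eg.verts \ G.verts)) ⊆ S →
      ((G.verts \ closureSink s r G Eg v0) ∪ (Eg.verts \ G.verts)) ⊆ S) :=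
  wedge_eq_union_general s r G Eg v0 hext
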